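/- Let g ≥ 2, a, a' positive integers with gcd(g,a) = gcd(a,a') = 1, and D = {d₁,…,d_t} ⊆ {0,…,g−1} with t ≥ 2, d₁ < ⋯ < d_t. If δ := gcd(a·a', d₂−d₁,…,d_t−d₁) = 1, then for every (b,b') ∈ Z_a × Z_{a'} and every i ≥ 1, there exists a word w over D whose length is a positive multiple of p := a'·φ(a(g−1)), such that g^i·(w)_g ≡ b (mod a) and S_g(w) ≡ b' (mod a'). -/

import Mathlib

/-!
Let `q = φ(a(g-1))`, so `g^q ≡ 1 (mod a(g-1))`: then `g^q ≡ 1 (mod a)` and `a` divides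
`1 + g + ⋯ + g^(q-1)`, i.e. a block of `q` copies of `d₀ = min D` has value `≡ 0 (mod a)`.
Hence a word made of blocks `e d₀ ⋯ d₀` of length `q` has value `≡ Σ (e - d₀) (mod a)` and, when
the number of blocks is a multiple of `a'`, digit sum `≡ Σ (e - d₀) (mod a')`. As `a a'` is
coprime to `gcd (e - d₀)`, Bézout gives leading digits `e ∈ D` with `Σ (e - d₀)` in any residue
class modulo `a a'`; the class is chosen by the Chinese remainder theorem, and blocks of `d₀`
pad the length.
-/

open List

namespace Finset

variable {α : Type*} [DecidableEq α]

theorem exists_list_sum_eq_gcd_mul {n : ℕ} [NeZero n] (s : Finset α) (v : α → ℕ) (k : ZMod n) :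
    ∃ E : List α, (∀ x ∈ E, x ∈ s) ∧ (E.map fun x => (v x : ZMod n)).sum = s.gcd v * k := by
  induction s using Finset.induction_on generalizing k with
  | empty => exact ⟨[], by simp, by simp⟩
  | insert d s _ ih =>
    obtain ⟨E, hEs, hE⟩ := ih (Nat.gcdB (v d) (s.gcd v) * k)
    refine ⟨.replicate (Nat.gcdA (v d) (s.gcd v) * k : ZMod n).val d ++ E, ?_, ?_⟩
    · intro x hx
      rcases mem_append.mp hx with hx | hx
      · exact eq_of_mem_replicate hx ▸ mem_insert_self d s
      · exact mem_insert_of_mem (hEs x hx)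
    · have bezout : ((Nat.gcd (v d) (s.gcd v) : ℕ) : ZMod n) =
          v d * Nat.gcdA (v d) (s.gcd v) + s.gcd v * Nat.gcdB (v d) (s.gcd v) := by
        exact_mod_cast congrArg (Int.cast : ℤ → ZMod n) (Nat.gcd_eq_gcd_ab (v d) (s.gcd v))
      simp only [map_append, map_replicate, sum_append, sum_replicate, nsmul_eq_mul,
        ZMod.natCast_zmod_val, hE, gcd_insert, gcd_eq_nat_gcd, bezout]
      ring

theorem exists_list_sum_modEq_of_coprime {n : ℕ} [NeZero n] (s : Finset α) (v : α → ℕ)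
    (hs : n.Coprime (s.gcd v)) (c : ℕ) :
    ∃ E : List α, (∀ x ∈ E, x ∈ s) ∧ (E.map v).sum ≡ c [MOD n] := by
  obtain ⟨E, hEs, hE⟩ := s.exists_list_sum_eq_gcd_mul v (n := n) (c * ((s.gcd v : ℕ) : ZMod n)⁻¹)
  refine ⟨E, hEs, (ZMod.natCast_eq_natCast_iff _ _ _).mp ?_⟩
  rw [Nat.cast_list_sum, List.map_map, Function.comp_def, hE, mul_left_comm,
    ZMod.coe_mul_inv_eq_one _ hs.symm, mul_one]

end Finset

theorem Nat.dvd_geomSum_of_pow_modEq_one {g a n : ℕ} (hg : 2 ≤ g)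
    (h : g ^ n ≡ 1 [MOD a * (g - 1)]) : a ∣ ∑ k ∈ Finset.range n, g ^ k := by
  have h := (Nat.modEq_iff_dvd' (Nat.one_le_pow _ _ (by omega))).mp h.symm
  rw [Nat.geomSum_eq hg]
  exact Nat.dvd_div_of_mul_dvd (mul_comm a _ ▸ h)

theorem Nat.ofDigits_replicate (g d n : ℕ) :
    ofDigits g (replicate n d) = d * ∑ k ∈ Finset.range n, g ^ k := by
  induction n with
  | zero => simp
  | succ n ih =>
    rw [replicate_succ, ofDigits_cons, ih, Finset.sum_range_succ']
    simp only [pow_succ', ← Finset.mul_sum]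
    ring

def blockWord (d n : ℕ) (E : List ℕ) : List ℕ :=
  (E.map fun e => e :: replicate n d).flatten

section blockWord

variable {d n : ℕ} {E : List ℕ}

@[simp]
theorem blockWord_nil : blockWord d n [] = [] := rfl

@[simp]
theorem blockWord_cons (e : ℕ) : blockWord d n (e :: E) = e :: replicate n d ++ blockWord d n E :=
  rfl

theorem length_blockWord : (blockWord d n E).length = E.length * (n + 1) := by
  induction E with
  | nil => simp
  | cons e E ih =>
    simp only [blockWord_cons, cons_append, length_cons, length_append, length_replicate, ih]
    ring

theorem mem_blockWord {x : ℕ} (hx : x ∈ blockWord d n E) : x ∈ E ∨ x = d := by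
  simp only [blockWord, mem_flatten, List.mem_map] at hx
  obtain ⟨_, ⟨e, he, rfl⟩, hx⟩ := hx
  rcases List.mem_cons.mp hx with rfl | hx
  · exact .inl he
  · exact .inr (eq_of_mem_replicate hx)

theorem sum_blockWord (hE : ∀ e ∈ E, d ≤ e) :
    (blockWord d n E).sum = (E.map (· - d)).sum + E.length * (n + 1) * d := by
  induction E with
  | nil => simp
  | cons e E ih =>
    have := hE e (mem_cons_self ..)
    simp only [blockWord_cons, cons_append, sum_cons, sum_append, sum_replicate, smul_eq_mul,
      map_cons, length_cons, ih fun x hx => hE x (mem_cons_of_mem _ hx)]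
    zify [this]
    ring

theorem natCast_ofDigits_blockWord {R : Type*} [CommRing R] {g : ℕ} (hg : (g : R) ^ (n + 1) = 1)
    (hd : ((Nat.ofDigits g (replicate (n + 1) d) : ℕ) : R) = 0) (hE : ∀ e ∈ E, d ≤ e) :
    ((Nat.ofDigits g (blockWord d n E) : ℕ) : R) = ((E.map (· - d)).sum : ℕ) := by
  induction E with
  | nil => simp
  | cons e E ih =>
    have hde := hE e (mem_cons_self ..)
    rw [replicate_succ, Nat.ofDigits_cons] at hd
    rw [blockWord_cons, Nat.ofDigits_append, length_cons, length_replicate, map_cons, sum_cons,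
      Nat.ofDigits_cons]
    have ih := ih fun x hx => hE x (mem_cons_of_mem _ hx)
    push_cast [hde] at hd ih ⊢
    rw [hg, one_mul, ih]
    linear_combination hd

theorem ofDigits_blockWord_modEq {g a : ℕ} (hg : 2 ≤ g) (hgn : g ^ (n + 1) ≡ 1 [MOD a * (g - 1)])
    (hE : ∀ e ∈ E, d ≤ e) : Nat.ofDigits g (blockWord d n E) ≡ (E.map (· - d)).sum [MOD a] := by
  have hgn' : (g : ZMod a) ^ (n + 1) = 1 := by
    exact_mod_cast (ZMod.natCast_eq_natCast_iff _ _ _).mpr (hgn.of_mul_right _)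
  have hd : ((Nat.ofDigits g (replicate (n + 1) d) : ℕ) : ZMod a) = 0 := by
    rw [ZMod.natCast_eq_zero_iff, Nat.ofDigits_replicate]
    exact (Nat.dvd_geomSum_of_pow_modEq_one hg hgn).mul_left d
  exact (ZMod.natCast_eq_natCast_iff _ _ _).mp (natCast_ofDigits_blockWord hgn' hd hE)

theorem sum_blockWord_modEq {a : ℕ} (hE : ∀ e ∈ E, d ≤ e) (ha : a ∣ E.length) :
    (blockWord d n E).sum ≡ (E.map (· - d)).sum [MOD a] := by
  rw [sum_blockWord hE]
  simpa using (Nat.modEq_zero_iff_dvd.mpr ((ha.mul_right (n + 1)).mul_right d)).add_left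
    (E.map (· - d)).sum

end blockWord

theorem exists_word_ofDigits_modEq_sum_modEq {D : Finset ℕ} {d g q a a' : ℕ} (hdD : d ∈ D)
    (hd : ∀ x ∈ D, d ≤ x) (hg : 2 ≤ g) (hq : 0 < q) (hgq : g ^ q ≡ 1 [MOD a * (g - 1)])
    (ha' : 0 < a') {E : List ℕ} (hED : ∀ e ∈ E, e ∈ D) :
    ∃ w : List ℕ, (∀ x ∈ w, x ∈ D) ∧ (∃ m, 1 ≤ m ∧ w.length = m * (a' * q)) ∧
      Nat.ofDigits g w ≡ (E.map (· - d)).sum [MOD a] ∧ w.sum ≡ (E.map (· - d)).sum [MOD a'] := by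
  set E' := E ++ replicate (a' * (E.length + 1) - E.length) d
  have hE'D : ∀ e ∈ E', e ∈ D := by
    intro e he
    rcases mem_append.mp he with he | he
    exacts [hED e he, eq_of_mem_replicate he ▸ hdD]
  have hE'd : ∀ e ∈ E', d ≤ e := fun e he => hd e (hE'D e he)
  have hE'sum : (E'.map (· - d)).sum = (E.map (· - d)).sum := by simp [E']
  have hE'len : E'.length = a' * (E.length + 1) := by
    have := Nat.le_mul_of_pos_left (E.length + 1) ha'
    simp only [E', length_append, length_replicate]
    omega
  rw [← Nat.sub_add_cancel hq] at hgq ⊢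
  refine ⟨blockWord d (q - 1) E', fun x hx => ?_, ⟨E.length + 1, by omega, ?_⟩,
    hE'sum ▸ ofDigits_blockWord_modEq hg hgq hE'd,
    hE'sum ▸ sum_blockWord_modEq hE'd (hE'len ▸ dvd_mul_right _ _)⟩
  · rcases mem_blockWord hx with hx | rfl
    exacts [hE'D x hx, hdD]
  · rw [length_blockWord, hE'len]
    ring

theorem irreducibility_words_general (g a a' : ℕ) (hg : 2 ≤ g)
    (hga : Nat.gcd g a = 1) (haa' : Nat.gcd a a' = 1)
    (D : Finset ℕ) (hD : D.Nonempty)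
    (hδ : Nat.gcd (a * a') (D.gcd fun d => d - D.min' hD) = 1) :
    ∀ b < a, ∀ b' < a', ∀ i ≥ 1,
      ∃ w : List ℕ, (∀ d ∈ w, d ∈ D) ∧
        (∃ m : ℕ, 1 ≤ m ∧ w.length = m * (a' * Nat.totient (a * (g - 1)))) ∧
        g ^ i * Nat.ofDigits g w ≡ b [MOD a] ∧
        w.sum ≡ b' [MOD a'] := by
  intro b hb b' hb' i _
  set q := Nat.totient (a * (g - 1))
  have hq : 0 < q := Nat.totient_pos.mpr (Nat.mul_pos (by omega) (by omega))
  have hgq : g ^ q ≡ 1 [MOD a * (g - 1)] := Nat.ModEq.pow_totient <| Nat.Coprime.mul_right hga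
    ((Nat.coprime_self_sub_right (by omega)).mpr (Nat.coprime_one_right g))
  have : NeZero (a * a') := ⟨Nat.mul_ne_zero (by omega) (by omega)⟩
  -- `g ^ (i * (q - 1))` inverts `g ^ i` modulo `a`
  obtain ⟨c, hca, hca'⟩ := Nat.chineseRemainder haa' (b * g ^ (i * (q - 1))) b'
  obtain ⟨E, hED, hE⟩ := D.exists_list_sum_modEq_of_coprime _ hδ c
  obtain ⟨w, hwD, hlen, hval, hsum⟩ := exists_word_ofDigits_modEq_sum_modEq (a' := a')
    (D.min'_mem hD) (fun x hx => D.min'_le x hx) hg hq hgq (by omega) hED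
  refine ⟨w, hwD, hlen, ?_, hsum.trans ((hE.of_mul_left a).trans hca')⟩
  calc g ^ i * Nat.ofDigits g w ≡ g ^ i * (b * g ^ (i * (q - 1))) [MOD a] :=
        (hval.trans ((hE.of_mul_right a').trans hca)).mul_left _
    _ = b * (g ^ q) ^ i := by rw [mul_left_comm, ← pow_add, ← pow_mul]; congr 2; zify [hq]; ring
    _ ≡ b * 1 ^ i [MOD a] := ((hgq.of_mul_right _).pow i).mul_left b
    _ = b := by simp

/-- Irreducibility: when `δ := gcd(a·a', d₂-d₁,…,d_t-d₁) = 1` and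
`gcd(g,a) = gcd(a,a') = 1`, for every pair of residues `(b,b')` and every `i ≥ 1`
there is a word `w` over `D`, of length a positive multiple of
`p := a'·φ(a(g-1))`, with `g^i·(w)_g ≡ b (mod a)` and `S_g(w) ≡ b' (mod a')`. -/
theorem irreducibility_words (g a a' : ℕ) (hg : 2 ≤ g) (ha : 1 ≤ a) (ha' : 1 ≤ a')
    (hga : Nat.gcd g a = 1) (haa' : Nat.gcd a a' = 1)
    (D : Finset ℕ) (hD : D.Nonempty) (hDsub : D ⊆ Finset.range g) (hcard : 2 ≤ D.card)
    (hδ : Nat.gcd (a * a') (D.gcd fun d => d - D.min' hD) = 1) :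
    ∀ b < a, ∀ b' < a', ∀ i ≥ 1,
      ∃ w : List ℕ, (∀ d ∈ w, d ∈ D) ∧
        (∃ m : ℕ, 1 ≤ m ∧ w.length = m * (a' * Nat.totient (a * (g - 1)))) ∧
        g ^ i * Nat.ofDigits g w ≡ b [MOD a] ∧
        w.sum ≡ b' [MOD a'] :=
  irreducibility_words_general g a a' hg hga haa' D hD hδ
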